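/- Let n ≥ 1, let A be an IFM of order n, let λ ∈ [0,1] and set α = (1+λ)/2. Then for every m ≥ 2 and all r, s, the consecutive powers of A under the ∗ operation satisfy |(A^m)μ r s − (A^(m−1))μ r s| ≤ α^(m−2) and |(A^m)ν r s − (A^(m−1))ν r s| ≤ α^(m−2). -/

import Mathlib

/-!
All entries of every power lie in `[0, 1]`, so the first difference `A² - A` is at most `1`.
For fixed `y`, both `x ↦ λ·min(x, y) + (1-λ)(x+y)/2` and its `max` analogue are
`α`-Lipschitz, and a maximum or minimum over finitely many indices is `1`-Lipschitz for the
sup-distance. Hence `X ↦ X ∗ A` is an `α`-contraction row by row, and the differences of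
consecutive powers decay like `α^k`.
-/

open Filter Topology


/-- Membership scalar operation of the convex combination of max-min and
maxarithmetic mean–minarithmetic mean: `x ⊛ y = λ·min(x,y) + (1-λ)·(x+y)/2`. -/
noncomputable def starMu (lam x y : ℝ) : ℝ :=
  lam * min x y + (1 - lam) * ((x + y) / 2)

/-- Non-membership scalar operation:
`x ⊛' y = λ·max(x,y) + (1-λ)·(x+y)/2`. -/
noncomputable def starNu (lam x y : ℝ) : ℝ :=
  lam * max x y + (1 - lam) * ((x + y) / 2)

/-- `A` (given by membership part `Amu` and non-membership part `Anu`) is an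
intuitionistic fuzzy matrix. -/
def IsIFM (n : ℕ) (Amu Anu : Fin n → Fin n → ℝ) : Prop :=
  ∀ i j, 0 ≤ Amu i j ∧ 0 ≤ Anu i j ∧ Amu i j + Anu i j ≤ 1

/-- Powers of an IFM under the convex combination `∗` of the max-min and the
maxarithmetic mean–minarithmetic mean operations: `A^1 = A`,
`A^(k+1) = A^k ∗ A` with
`(X ∗ A)μ i j = max_t (Xμ i t ⊛ Aμ t j)` and
`(X ∗ A)ν i j = min_t (Xν i t ⊛' Aν t j)`.
(The value at `0` is irrelevant; it is set to `A`.) -/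
noncomputable def sPow (n : ℕ) (lam : ℝ) (Amu Anu : Fin n → Fin n → ℝ) :
    ℕ → (Fin n → Fin n → ℝ) × (Fin n → Fin n → ℝ)
  | 0 => (Amu, Anu)
  | 1 => (Amu, Anu)
  | m + 2 =>
    let X := sPow n lam Amu Anu (m + 1)
    (fun i j => ⨆ t : Fin n, starMu lam (X.1 i t) (Amu t j),
     fun i j => ⨅ t : Fin n, starNu lam (X.2 i t) (Anu t j))

section FiniteSupInf

variable {ι : Type*} [Nonempty ι] [Finite ι] {f g : ι → ℝ}

theorem ciSup_mem_of_forall_mem {s : Set ℝ} (h : ∀ t, f t ∈ s) : ⨆ t, f t ∈ s := by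
  obtain ⟨t, ht⟩ := exists_eq_ciSup_of_finite (f := f)
  exact ht ▸ h t

theorem ciInf_mem_of_forall_mem {s : Set ℝ} (h : ∀ t, f t ∈ s) : ⨅ t, f t ∈ s := by
  obtain ⟨t, ht⟩ := exists_eq_ciInf_of_finite (f := f)
  exact ht ▸ h t

theorem ciSup_le_ciSup_add {c : ℝ} (h : ∀ t, f t ≤ g t + c) :
    ⨆ t, f t ≤ (⨆ t, g t) + c :=
  ciSup_le fun t => (h t).trans <| by
    gcongr; exact le_ciSup (Set.finite_range g).bddAbove t

theorem ciInf_le_ciInf_add {c : ℝ} (h : ∀ t, f t ≤ g t + c) :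
    ⨅ t, f t ≤ (⨅ t, g t) + c := by
  rw [← sub_le_iff_le_add]
  exact le_ciInf fun t =>
    sub_le_iff_le_add.2 <| (ciInf_le (Set.finite_range f).bddBelow t).trans (h t)

theorem abs_ciSup_sub_ciSup_le {c : ℝ} (h : ∀ t, |f t - g t| ≤ c) :
    |(⨆ t, f t) - ⨆ t, g t| ≤ c := by
  refine abs_sub_le_iff.2 ⟨?_, ?_⟩ <;> rw [sub_le_iff_le_add']
  · exact ciSup_le_ciSup_add fun t => by linarith [(abs_sub_le_iff.1 (h t)).1]
  · exact ciSup_le_ciSup_add fun t => by linarith [(abs_sub_le_iff.1 (h t)).2]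

theorem abs_ciInf_sub_ciInf_le {c : ℝ} (h : ∀ t, |f t - g t| ≤ c) :
    |(⨅ t, f t) - ⨅ t, g t| ≤ c := by
  refine abs_sub_le_iff.2 ⟨?_, ?_⟩ <;> rw [sub_le_iff_le_add']
  · exact ciInf_le_ciInf_add fun t => by linarith [(abs_sub_le_iff.1 (h t)).1]
  · exact ciInf_le_ciInf_add fun t => by linarith [(abs_sub_le_iff.1 (h t)).2]

end FiniteSupInf

theorem forall_le_pow_mul_of_contracting {ι : Type*} {e : ℕ → ι → ℝ} {α C : ℝ}
    (h₀ : ∀ i, e 0 i ≤ C)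
    (hstep : ∀ k c, (∀ i, e k i ≤ c) → ∀ i, e (k + 1) i ≤ α * c) :
    ∀ k i, e k i ≤ α ^ k * C := by
  intro k
  induction k with
  | zero => simpa using h₀
  | succ k ih => simpa only [pow_succ', mul_assoc] using hstep k _ ih

section StarOps

variable {lam : ℝ}

theorem starMu_mem_Icc (hlam : lam ∈ Set.Icc (0 : ℝ) 1) {x y : ℝ}
    (hx : x ∈ Set.Icc (0 : ℝ) 1) (hy : y ∈ Set.Icc (0 : ℝ) 1) :
    starMu lam x y ∈ Set.Icc (0 : ℝ) 1 := by
  obtain ⟨hl₀, hl₁⟩ := hlam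
  obtain ⟨hx₀, hx₁⟩ := hx
  obtain ⟨hy₀, hy₁⟩ := hy
  have hmin₀ : 0 ≤ min x y := le_min hx₀ hy₀
  have hmin₁ : min x y ≤ 1 := min_le_of_left_le hx₁
  constructor <;> unfold starMu <;> nlinarith

theorem starNu_mem_Icc (hlam : lam ∈ Set.Icc (0 : ℝ) 1) {x y : ℝ}
    (hx : x ∈ Set.Icc (0 : ℝ) 1) (hy : y ∈ Set.Icc (0 : ℝ) 1) :
    starNu lam x y ∈ Set.Icc (0 : ℝ) 1 := by
  obtain ⟨hl₀, hl₁⟩ := hlam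
  obtain ⟨hx₀, hx₁⟩ := hx
  obtain ⟨hy₀, hy₁⟩ := hy
  have hmax₀ : 0 ≤ max x y := le_max_of_le_left hx₀
  have hmax₁ : max x y ≤ 1 := max_le hx₁ hy₁
  constructor <;> unfold starNu <;> nlinarith

theorem abs_starMu_sub_starMu_le (hlam : lam ∈ Set.Icc (0 : ℝ) 1) (x x' y : ℝ) :
    |starMu lam x y - starMu lam x' y| ≤ (1 + lam) / 2 * |x - x'| := by
  obtain ⟨hl₀, hl₁⟩ := hlam
  have hcoef : 0 ≤ (1 - lam) / 2 := by linarith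
  have hmin : |min x y - min x' y| ≤ |x - x'| := by
    simpa using abs_min_sub_min_le_max x y x' y
  calc |starMu lam x y - starMu lam x' y|
      = |lam * (min x y - min x' y) + (1 - lam) / 2 * (x - x')| := by unfold starMu; ring_nf
    _ ≤ |lam * (min x y - min x' y)| + |(1 - lam) / 2 * (x - x')| := abs_add_le _ _
    _ = lam * |min x y - min x' y| + (1 - lam) / 2 * |x - x'| := by
        rw [abs_mul, abs_mul, abs_of_nonneg hl₀, abs_of_nonneg hcoef]
    _ ≤ (1 + lam) / 2 * |x - x'| := by nlinarith

theorem abs_starNu_sub_starNu_le (hlam : lam ∈ Set.Icc (0 : ℝ) 1) (x x' y : ℝ) :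
    |starNu lam x y - starNu lam x' y| ≤ (1 + lam) / 2 * |x - x'| := by
  obtain ⟨hl₀, hl₁⟩ := hlam
  have hcoef : 0 ≤ (1 - lam) / 2 := by linarith
  have hmax : |max x y - max x' y| ≤ |x - x'| := abs_max_sub_max_le_abs x x' y
  calc |starNu lam x y - starNu lam x' y|
      = |lam * (max x y - max x' y) + (1 - lam) / 2 * (x - x')| := by unfold starNu; ring_nf
    _ ≤ |lam * (max x y - max x' y)| + |(1 - lam) / 2 * (x - x')| := abs_add_le _ _
    _ = lam * |max x y - max x' y| + (1 - lam) / 2 * |x - x'| := by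
        rw [abs_mul, abs_mul, abs_of_nonneg hl₀, abs_of_nonneg hcoef]
    _ ≤ (1 + lam) / 2 * |x - x'| := by nlinarith

end StarOps

theorem IsIFM.mem_Icc {n : ℕ} {Amu Anu : Fin n → Fin n → ℝ} (hA : IsIFM n Amu Anu)
    (i j : Fin n) :
    Amu i j ∈ Set.Icc (0 : ℝ) 1 ∧ Anu i j ∈ Set.Icc (0 : ℝ) 1 := by
  obtain ⟨hμ, hν, hsum⟩ := hA i j
  exact ⟨⟨hμ, by linarith⟩, ⟨hν, by linarith⟩⟩

section Powers

variable {n : ℕ} {Amu Anu : Fin n → Fin n → ℝ} {lam : ℝ}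

theorem sPow_mem_Icc (hA : IsIFM n Amu Anu) (hlam : lam ∈ Set.Icc (0 : ℝ) 1) :
    ∀ m i j, (sPow n lam Amu Anu m).1 i j ∈ Set.Icc (0 : ℝ) 1 ∧
      (sPow n lam Amu Anu m).2 i j ∈ Set.Icc (0 : ℝ) 1
  | 0, i, j => hA.mem_Icc i j
  | 1, i, j => hA.mem_Icc i j
  | m + 2, i, j =>
    have : Nonempty (Fin n) := ⟨i⟩
    ⟨ciSup_mem_of_forall_mem fun t =>
        starMu_mem_Icc hlam (sPow_mem_Icc hA hlam (m + 1) i t).1 (hA.mem_Icc t j).1,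
      ciInf_mem_of_forall_mem fun t =>
        starNu_mem_Icc hlam (sPow_mem_Icc hA hlam (m + 1) i t).2 (hA.mem_Icc t j).2⟩

theorem abs_sPow_two_sub_sPow_one_le (hA : IsIFM n Amu Anu) (hlam : lam ∈ Set.Icc (0 : ℝ) 1)
    (r s : Fin n) :
    |(sPow n lam Amu Anu 2).1 r s - (sPow n lam Amu Anu 1).1 r s| ≤ 1 ∧
      |(sPow n lam Amu Anu 2).2 r s - (sPow n lam Amu Anu 1).2 r s| ≤ 1 := by
  obtain ⟨⟨hμ₀, hμ₁⟩, hν₀, hν₁⟩ := sPow_mem_Icc hA hlam 2 r s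
  obtain ⟨⟨hμ₀', hμ₁'⟩, hν₀', hν₁'⟩ := sPow_mem_Icc hA hlam 1 r s
  constructor <;> rw [abs_sub_le_iff] <;> constructor <;> linarith

theorem abs_sPow_fst_succ_sub_le (hlam : lam ∈ Set.Icc (0 : ℝ) 1)
    {k : ℕ} {r : Fin n} {c : ℝ}
    (h : ∀ t, |(sPow n lam Amu Anu (k + 2)).1 r t - (sPow n lam Amu Anu (k + 1)).1 r t| ≤ c)
    (s : Fin n) :
    |(sPow n lam Amu Anu (k + 3)).1 r s - (sPow n lam Amu Anu (k + 2)).1 r s| ≤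
      (1 + lam) / 2 * c :=
  have : Nonempty (Fin n) := ⟨r⟩
  abs_ciSup_sub_ciSup_le fun t => (abs_starMu_sub_starMu_le hlam _ _ _).trans <|
    mul_le_mul_of_nonneg_left (h t) (by linarith [hlam.1])

theorem abs_sPow_snd_succ_sub_le (hlam : lam ∈ Set.Icc (0 : ℝ) 1)
    {k : ℕ} {r : Fin n} {c : ℝ}
    (h : ∀ t, |(sPow n lam Amu Anu (k + 2)).2 r t - (sPow n lam Amu Anu (k + 1)).2 r t| ≤ c)
    (s : Fin n) :
    |(sPow n lam Amu Anu (k + 3)).2 r s - (sPow n lam Amu Anu (k + 2)).2 r s| ≤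
      (1 + lam) / 2 * c :=
  have : Nonempty (Fin n) := ⟨r⟩
  abs_ciInf_sub_ciInf_le fun t => (abs_starNu_sub_starNu_le hlam _ _ _).trans <|
    mul_le_mul_of_nonneg_left (h t) (by linarith [hlam.1])

end Powers

theorem sPow_consecutive_close_general (n : ℕ)
    (Amu Anu : Fin n → Fin n → ℝ) (hA : IsIFM n Amu Anu)
    (lam : ℝ) (hlam : lam ∈ Set.Icc (0 : ℝ) 1)
    (alpha : ℝ) (halpha : alpha = (1 + lam) / 2)
    (m : ℕ) (hm : 2 ≤ m) (r s : Fin n) :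
    |(sPow n lam Amu Anu m).1 r s - (sPow n lam Amu Anu (m - 1)).1 r s| ≤
        alpha ^ (m - 2) ∧
      |(sPow n lam Amu Anu m).2 r s - (sPow n lam Amu Anu (m - 1)).2 r s| ≤
        alpha ^ (m - 2) := by
  obtain ⟨k, rfl⟩ := Nat.exists_eq_add_of_le' hm
  subst halpha
  have hbase := abs_sPow_two_sub_sPow_one_le hA hlam r
  simp only [Nat.add_sub_cancel, Nat.add_succ_sub_one]
  constructor
  · simpa using forall_le_pow_mul_of_contracting
      (e := fun k t => |(sPow n lam Amu Anu (k + 2)).1 r t - (sPow n lam Amu Anu (k + 1)).1 r t|)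
      (fun t => (hbase t).1) (fun _ _ h => abs_sPow_fst_succ_sub_le hlam h) k s
  · simpa using forall_le_pow_mul_of_contracting
      (e := fun k t => |(sPow n lam Amu Anu (k + 2)).2 r t - (sPow n lam Amu Anu (k + 1)).2 r t|)
      (fun t => (hbase t).2) (fun _ _ h => abs_sPow_snd_succ_sub_le hlam h) k s

/-- Consecutive powers under the `∗` operation differ by at most `α^(m-2)`
entrywise, where `α = (1+λ)/2`. -/
theorem sPow_consecutive_close (n : ℕ) (hn : 1 ≤ n)
    (Amu Anu : Fin n → Fin n → ℝ) (hA : IsIFM n Amu Anu)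
    (lam : ℝ) (hlam : lam ∈ Set.Icc (0 : ℝ) 1)
    (alpha : ℝ) (halpha : alpha = (1 + lam) / 2)
    (m : ℕ) (hm : 2 ≤ m) (r s : Fin n) :
    |(sPow n lam Amu Anu m).1 r s - (sPow n lam Amu Anu (m - 1)).1 r s| ≤
        alpha ^ (m - 2) ∧
      |(sPow n lam Amu Anu m).2 r s - (sPow n lam Amu Anu (m - 1)).2 r s| ≤
        alpha ^ (m - 2) :=
  sPow_consecutive_close_general n Amu Anu hA lam hlam alpha halpha m hm r s
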